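/- Let Γ be a group of automorphisms of the group G such that the external semidirect product E = G ⋊ Γ is locally nilpotent, and let H be a Γ-invariant subgroup of G which is a C_{Aut G}(Γ)-basis. If either Γ is finitely generated or E is hypercentral, then C_E(H) = C_E(G); in particular, H is an Inn-basis of G (i.e., C_G(H) = Z(G)). -/

import Mathlib

universe u

theorem Subgroup.normal_iSup_of_normal {G : Type u} [Group G] {ι : Sort*}
    (f : ι → Subgroup G) (h : ∀ i, (f i).Normal) : (⨆ i, f i).Normal := by
  constructor
  intro x hx g
  refine Subgroup.iSup_induction (C := fun y => g * y * g⁻¹ ∈ ⨆ i, f i) f hx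
    (fun i y hy => le_iSup f i ((h i).conj_mem y hy g)) (by simpa using Subgroup.one_mem _) ?_
  intro a b ha hb
  have hab : g * (a * b) * g⁻¹ = (g * a * g⁻¹) * (g * b * g⁻¹) := by group
  rw [hab]; exact mul_mem ha hb

/-- The transfinite upper central series of a group, as ordinal-indexed normal subgroups. -/
noncomputable def transUpperCentralSeriesAux (G : Type u) [Group G] :
    Ordinal.{u} → {H : Subgroup G // H.Normal} := fun o =>
  Ordinal.limitRecOn o
    ⟨⊥, inferInstance⟩
    (fun _ Z => ⟨@upperCentralSeriesStep G _ Z.1 Z.2, by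
      haveI := Z.2; show (Subgroup.upperCentralSeriesStep Z.1).Normal
      rw [Subgroup.upperCentralSeriesStep_eq_comap_center]
      exact Subgroup.Normal.comap inferInstance _⟩)
    (fun o _ ih => ⟨⨆ (o' : Ordinal.{u}) (ho' : o' < o), (ih o' ho').1,
      Subgroup.normal_iSup_of_normal _ fun o' =>
        Subgroup.normal_iSup_of_normal _ fun ho' => (ih o' ho').2⟩)

/-- The transfinite upper central series. -/
noncomputable def transUpperCentralSeries (G : Type u) [Group G] (o : Ordinal.{u}) :
    Subgroup G := (transUpperCentralSeriesAux G o).1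

/-- The hypercentre of a group: the union of the transfinite upper central series. -/
noncomputable def hypercenter (G : Type u) [Group G] : Subgroup G :=
  ⨆ o : Ordinal.{u}, transUpperCentralSeries G o

/-- A group is hypercentral if it equals the union of its transfinite upper central series. -/
def IsHypercentral (G : Type u) [Group G] : Prop := hypercenter G = ⊤

/-- The hypercentral length: the least ordinal `o` with `Z_o(G) = G`. -/
noncomputable def hypercentralLength (G : Type u) [Group G] : Ordinal.{u} :=
  sInf {o : Ordinal.{u} | transUpperCentralSeries G o = ⊤}

/-- A group is locally nilpotent if every finitely generated subgroup is nilpotent. -/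
def IsLocallyNilpotent (G : Type*) [Group G] : Prop :=
  ∀ S : Subgroup G, S.FG → Group.IsNilpotent S


/-!
An element `e` of `E = G ⋊ Γ` centralizing `H` acts on `G`, by conjugation in `E`, as an
automorphism fixing `H` pointwise. The automorphisms fixing `H` pointwise form a subgroup `K` of
`Aut G`, normalized by `Γ` because `H` is `Γ`-invariant, and meeting `C(Γ)` trivially because `H`
is a `C_{Aut G}(Γ)`-basis. Together with `Γ` (or a finite generating set of it), `e` generates a
hypercentral subgroup of `E` (nilpotent in the finitely generated case), whose image `M` in
`Aut G` contains `Γ` and normalizes `K`. If the normal subgroup `K ∩ M` of `M` were nontrivial it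
would contain a nontrivial element of `Z(M) ≤ C(Γ)`; hence `e` acts trivially, i.e. centralizes
`G`.
-/

open Subgroup

open scoped commutatorElement Pointwise

section TransUpperCentralSeries

variable {X Y : Type u} [Group X] [Group Y]

instance transUpperCentralSeries_normal (o : Ordinal.{u}) :
    (transUpperCentralSeries X o).Normal :=
  (transUpperCentralSeriesAux X o).2

lemma transUpperCentralSeries_zero : transUpperCentralSeries X 0 = ⊥ := by
  simp [transUpperCentralSeries, transUpperCentralSeriesAux]

lemma mem_transUpperCentralSeries_add_one {o : Ordinal.{u}} {x : X} :
    x ∈ transUpperCentralSeries X (o + 1) ↔ ∀ y, ⁅x, y⁆ ∈ transUpperCentralSeries X o := by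
  simp only [transUpperCentralSeries, transUpperCentralSeriesAux, Ordinal.limitRecOn_add_one]
  exact Iff.rfl

lemma transUpperCentralSeries_of_isSuccLimit {o : Ordinal.{u}} (ho : Order.IsSuccLimit o) :
    transUpperCentralSeries X o = ⨆ o' < o, transUpperCentralSeries X o' := by
  simp only [transUpperCentralSeries, transUpperCentralSeriesAux,
    Ordinal.limitRecOn_limit _ _ _ _ ho]

lemma transUpperCentralSeries_le_add_one (o : Ordinal.{u}) :
    transUpperCentralSeries X o ≤ transUpperCentralSeries X (o + 1) := fun _ hx =>
  mem_transUpperCentralSeries_add_one.2 fun y =>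
    commutator_le_left _ ⊤ (commutator_mem_commutator hx (mem_top y))

lemma transUpperCentralSeries_mono : Monotone (transUpperCentralSeries X) := by
  suffices h : ∀ o o' : Ordinal.{u}, o' ≤ o →
      transUpperCentralSeries X o' ≤ transUpperCentralSeries X o from fun _ _ hab => h _ _ hab
  intro o
  induction o using Ordinal.limitRecOn with
  | zero => intro o' h; rw [nonpos_iff_eq_zero.1 h]
  | add_one o ih =>
    intro o' h
    rw [← Order.succ_eq_add_one, Order.le_succ_iff_eq_or_le, Order.succ_eq_add_one] at h
    rcases h with rfl | h
    · exact le_rfl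
    · exact (ih o' h).trans (transUpperCentralSeries_le_add_one o)
  | limit o ho _ =>
    intro o' h
    rcases h.eq_or_lt with rfl | h
    · exact le_rfl
    · rw [transUpperCentralSeries_of_isSuccLimit ho]
      exact le_iSup₂_of_le o' h le_rfl

lemma mem_transUpperCentralSeries_of_isSuccLimit {o : Ordinal.{u}} (ho : Order.IsSuccLimit o)
    {x : X} : x ∈ transUpperCentralSeries X o ↔ ∃ o' < o, x ∈ transUpperCentralSeries X o' := by
  have hdir : DirectedOn (Function.onFun (· ≤ ·) (transUpperCentralSeries X)) {o' | o' < o} :=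
    fun a ha b hb => ⟨max a b, Set.mem_setOf.2 (max_lt ha hb),
      transUpperCentralSeries_mono (le_max_left a b),
      transUpperCentralSeries_mono (le_max_right a b)⟩
  rw [transUpperCentralSeries_of_isSuccLimit ho,
    mem_biSup_of_directedOn (p := (· < o)) ho.bot_lt hdir]

lemma mem_hypercenter_iff {x : X} :
    x ∈ hypercenter X ↔ ∃ o, x ∈ transUpperCentralSeries X o :=
  mem_iSup_of_directed transUpperCentralSeries_mono.directed_le

lemma isHypercentral_iff : IsHypercentral X ↔ ∀ x : X, ∃ o, x ∈ transUpperCentralSeries X o := by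
  simp only [IsHypercentral, eq_top_iff', mem_hypercenter_iff]

lemma comap_transUpperCentralSeries_le {f : X →* Y} (hf : Function.Injective f) (o : Ordinal.{u}) :
    (transUpperCentralSeries Y o).comap f ≤ transUpperCentralSeries X o := by
  induction o using Ordinal.limitRecOn with
  | zero =>
    rw [transUpperCentralSeries_zero, transUpperCentralSeries_zero]
    exact fun x hx => mem_bot.2 ((map_eq_one_iff f hf).1 (mem_bot.1 hx))
  | add_one o ih =>
    intro x hx
    refine mem_transUpperCentralSeries_add_one.2 fun y => ih ?_
    simpa only [mem_comap, map_commutatorElement] using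
      mem_transUpperCentralSeries_add_one.1 hx (f y)
  | limit o ho ih =>
    intro x hx
    obtain ⟨o', ho', hx⟩ := (mem_transUpperCentralSeries_of_isSuccLimit ho).1 hx
    exact (mem_transUpperCentralSeries_of_isSuccLimit ho).2 ⟨o', ho', ih o' ho' hx⟩

lemma map_transUpperCentralSeries_le {f : X →* Y} (hf : Function.Surjective f) (o : Ordinal.{u}) :
    (transUpperCentralSeries X o).map f ≤ transUpperCentralSeries Y o := by
  induction o using Ordinal.limitRecOn with
  | zero => simp only [transUpperCentralSeries_zero, Subgroup.map_bot, le_refl]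
  | add_one o ih =>
    rintro _ ⟨x, hx, rfl⟩
    refine mem_transUpperCentralSeries_add_one.2 fun y => ?_
    obtain ⟨y, rfl⟩ := hf y
    rw [← map_commutatorElement]
    exact ih (mem_map_of_mem f (mem_transUpperCentralSeries_add_one.1 hx y))
  | limit o ho ih =>
    rintro _ ⟨x, hx, rfl⟩
    obtain ⟨o', ho', hx⟩ := (mem_transUpperCentralSeries_of_isSuccLimit ho).1 hx
    exact (mem_transUpperCentralSeries_of_isSuccLimit ho).2
      ⟨o', ho', ih o' ho' (mem_map_of_mem f hx)⟩

lemma upperCentralSeries_le_transUpperCentralSeries (n : ℕ) :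
    Subgroup.upperCentralSeries X n ≤ transUpperCentralSeries X n := by
  induction n with
  | zero => simp only [Subgroup.upperCentralSeries_zero, bot_le]
  | succ n ih =>
    intro x hx
    rw [Nat.cast_succ, mem_transUpperCentralSeries_add_one]
    exact fun y => ih (Subgroup.mem_upperCentralSeries_succ_iff.1 hx y)

lemma IsHypercentral.of_injective (hY : IsHypercentral Y) {f : X →* Y}
    (hf : Function.Injective f) : IsHypercentral X :=
  isHypercentral_iff.2 fun x =>
    (isHypercentral_iff.1 hY (f x)).imp fun o hx => comap_transUpperCentralSeries_le hf o hx

lemma IsHypercentral.of_surjective (hX : IsHypercentral X) {f : X →* Y}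
    (hf : Function.Surjective f) : IsHypercentral Y := by
  refine isHypercentral_iff.2 fun y => ?_
  obtain ⟨x, rfl⟩ := hf y
  exact (isHypercentral_iff.1 hX x).imp fun o hx =>
    map_transUpperCentralSeries_le hf o (mem_map_of_mem f hx)

lemma Group.IsNilpotent.isHypercentral [hX : Group.IsNilpotent X] : IsHypercentral X := by
  obtain ⟨n, hn⟩ := hX.nilpotent'
  refine isHypercentral_iff.2 fun x => ⟨n, upperCentralSeries_le_transUpperCentralSeries n ?_⟩
  rw [hn]
  exact mem_top x

lemma IsHypercentral.eq_bot_of_inf_center_eq_bot (hX : IsHypercentral X) {N : Subgroup X}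
    [N.Normal] (hN : N ⊓ center X = ⊥) : N = ⊥ := by
  have h : ∀ o : Ordinal.{u}, ∀ x ∈ N, x ∈ transUpperCentralSeries X o → x = 1 := by
    intro o
    induction o using Ordinal.limitRecOn with
    | zero => simp [transUpperCentralSeries_zero]
    | add_one o ih =>
      intro x hxN hx
      have hcomm : ∀ y : X, ⁅x, y⁆ = 1 := fun y =>
        ih _ (commutator_le_left N ⊤ (commutator_mem_commutator hxN (mem_top y)))
          (mem_transUpperCentralSeries_add_one.1 hx y)
      refine mem_bot.1 ?_
      rw [← hN]
      exact ⟨hxN, mem_center_iff.2 fun y =>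
        (commutatorElement_eq_one_iff_commute.1 (hcomm y)).symm⟩
    | limit o ho ih =>
      intro x hxN hx
      obtain ⟨o', ho', hx⟩ := (mem_transUpperCentralSeries_of_isSuccLimit ho).1 hx
      exact ih o' ho' x hxN hx
  refine eq_bot_iff.2 fun x hx => ?_
  obtain ⟨o, ho⟩ := isHypercentral_iff.1 hX x
  exact h o x hx ho

end TransUpperCentralSeries

section Normalizer

variable {A : Type u} [Group A]

lemma Subgroup.inf_eq_bot_of_isHypercentral {K M : Subgroup A} (hM : IsHypercentral M)
    (hMK : M ≤ normalizer (K : Set A)) (hZ : K ⊓ centralizer (M : Set A) ⊓ M = ⊥) :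
    K ⊓ M = ⊥ := by
  have : (K.subgroupOf M).Normal :=
    ⟨fun n hn m => mem_subgroupOf.2 ((mem_normalizer_iff.1 (hMK m.2) n).1 (mem_subgroupOf.1 hn))⟩
  rw [← disjoint_iff, ← subgroupOf_eq_bot]
  refine hM.eq_bot_of_inf_center_eq_bot (eq_bot_iff.2 fun z ⟨hzK, hzZ⟩ => ?_)
  have hz : (z : A) ∈ K ⊓ centralizer (M : Set A) ⊓ M :=
    ⟨⟨hzK, fun m hm => congrArg Subtype.val (mem_center_iff.1 hzZ ⟨m, hm⟩)⟩, z.2⟩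
  rw [hZ] at hz
  exact mem_bot.2 (Subtype.ext (mem_bot.1 hz))

lemma eq_one_of_mem_of_isHypercentral_closure_insert {Γ K : Subgroup A} {T : Set A}
    (hT : closure T = Γ) (hΓK : Γ ≤ normalizer (K : Set A))
    (hK : K ⊓ centralizer (Γ : Set A) = ⊥) {a : A} (ha : a ∈ K)
    (hM : IsHypercentral (closure (insert a T))) : a = 1 := by
  have hΓM : Γ ≤ closure (insert a T) := hT ▸ closure_mono (Set.subset_insert a T)
  have hMK : closure (insert a T) ≤ normalizer (K : Set A) :=
    (closure_le _).2 (Set.insert_subset (le_normalizer ha)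
      ((hT ▸ Subgroup.subset_closure : T ⊆ Γ).trans hΓK))
  have hZ : K ⊓ centralizer (closure (insert a T) : Set A) ⊓ closure (insert a T) = ⊥ :=
    eq_bot_iff.2 fun x hx => hK ▸ ⟨hx.1.1, centralizer_le hΓM hx.1.2⟩
  have haKM : a ∈ K ⊓ closure (insert a T) := ⟨ha, subset_closure (Set.mem_insert a T)⟩
  rw [inf_eq_bot_of_isHypercentral hM hMK hZ] at haKM
  exact mem_bot.1 haKM

lemma MulAut.conj_mem_fixingSubgroup_iff {s : Set A} {c : A} :
    MulAut.conj c ∈ fixingSubgroup (MulAut A) s ↔ c ∈ centralizer s := by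
  simp only [mem_fixingSubgroup_iff, mem_centralizer_iff, MulAut.smul_def, MulAut.conj_apply,
    mul_inv_eq_iff_eq_mul]
  exact forall₂_congr fun _ _ => eq_comm

lemma mem_normalizer_fixingSubgroup {M α : Type*} [Group M] [MulAction M α] {g : M} {s : Set α}
    (hg : g • s = s) : g ∈ normalizer (fixingSubgroup M s : Set M) :=
  mem_normalizer_iff_map_conj_eq.2 (SubMulAction.fixingSubgroup_map_conj_eq hg)

end Normalizer

namespace SemidirectProduct

variable {N G : Type*} [Group N] [Group G] (φ : G →* MulAut N)

def toMulAut : N ⋊[φ] G →* MulAut N :=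
  lift MulAut.conj φ fun g => by ext n x; simp [mul_assoc]

@[simp]
lemma toMulAut_inl (n : N) : toMulAut φ (inl n) = MulAut.conj n := lift_inl ..

@[simp]
lemma toMulAut_inr (g : G) : toMulAut φ (inr g) = φ g := lift_inr ..

lemma toMulAut_apply (e : N ⋊[φ] G) (x : N) :
    toMulAut φ e x = e.left * φ e.right x * e.left⁻¹ := by
  conv_lhs => rw [← inl_left_mul_inr_right e]
  rw [map_mul, MulAut.mul_apply, toMulAut_inl, toMulAut_inr, MulAut.conj_apply]

variable {φ}

lemma commute_inl_iff {n : N} {e : N ⋊[φ] G} : Commute (inl n) e ↔ toMulAut φ e n = n := by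
  rw [toMulAut_apply, mul_inv_eq_iff_eq_mul, commute_iff_eq, SemidirectProduct.ext_iff]
  simp [eq_comm]

lemma mem_centralizer_map_inl_iff {H : Subgroup N} {e : N ⋊[φ] G} :
    e ∈ centralizer ((H.map inl : Subgroup (N ⋊[φ] G)) : Set (N ⋊[φ] G)) ↔
      toMulAut φ e ∈ fixingSubgroup (MulAut N) (H : Set N) := by
  simp only [mem_centralizer_iff, coe_map, Set.forall_mem_image, mem_fixingSubgroup_iff,
    MulAut.smul_def, ← commute_iff_eq, commute_inl_iff]

lemma centralizer_map_inl_eq_of_toMulAut_eq_one {H : Subgroup N}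
    (h : ∀ e : N ⋊[φ] G, toMulAut φ e ∈ fixingSubgroup (MulAut N) (H : Set N) → toMulAut φ e = 1) :
    centralizer ((H.map inl : Subgroup (N ⋊[φ] G)) : Set (N ⋊[φ] G)) =
      centralizer (((⊤ : Subgroup N).map inl : Subgroup (N ⋊[φ] G)) : Set (N ⋊[φ] G)) := by
  refine le_antisymm (fun e he => ?_) (centralizer_le (map_mono le_top))
  rw [mem_centralizer_map_inl_iff] at he ⊢
  rw [h e he]
  exact one_mem _

lemma centralizer_eq_center_of_centralizer_map_inl_eq {H : Subgroup N}
    (hC : centralizer ((H.map inl : Subgroup (N ⋊[φ] G)) : Set (N ⋊[φ] G)) =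
      centralizer (((⊤ : Subgroup N).map inl : Subgroup (N ⋊[φ] G)) : Set (N ⋊[φ] G))) :
    centralizer (H : Set N) = center N := by
  ext c
  rw [← MulAut.conj_mem_fixingSubgroup_iff, ← toMulAut_inl φ, ← mem_centralizer_map_inl_iff, hC,
    mem_centralizer_map_inl_iff, toMulAut_inl, MulAut.conj_mem_fixingSubgroup_iff, coe_top,
    centralizer_univ]

end SemidirectProduct

namespace SemidirectProduct

variable {N G : Type u} [Group N] [Group G] {φ : G →* MulAut N}

lemma exists_closure_eq_range_isHypercentral (hE : IsLocallyNilpotent (N ⋊[φ] G))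
    (hcase : Group.FG G ∨ IsHypercentral (N ⋊[φ] G)) (e : N ⋊[φ] G) :
    ∃ T : Set (MulAut N), closure T = φ.range ∧
      IsHypercentral (closure (insert (toMulAut φ e) T)) := by
  obtain ⟨S, hS, hL⟩ : ∃ S : Set G, closure S = ⊤ ∧
      IsHypercentral (closure (insert e (inr '' S))) := by
    rcases hcase with hG | hE'
    · obtain ⟨S, hS, hSfin⟩ := Group.fg_iff.1 hG
      have hfg : (closure (insert e (inr '' S))).FG :=
        (fg_iff _).2 ⟨_, rfl, (hSfin.image _).insert e⟩
      have : Group.IsNilpotent _ := hE _ hfg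
      exact ⟨S, hS, Group.IsNilpotent.isHypercentral⟩
    · exact ⟨Set.univ, closure_univ, hE'.of_injective (subtype_injective _)⟩
  refine ⟨φ '' S, by rw [← MonoidHom.map_closure, hS, ← MonoidHom.range_eq_map], ?_⟩
  have hmap : (closure (insert e (inr '' S))).map (toMulAut φ) =
      closure (insert (toMulAut φ e) (φ '' S)) := by
    rw [MonoidHom.map_closure, Set.image_insert_eq, Set.image_image]
    simp only [toMulAut_inr]
  rw [← hmap]
  exact hL.of_surjective ((toMulAut φ).subgroupMap_surjective _)

end SemidirectProduct

/-- Let `Γ` be a group of automorphisms of `G` with `E = G ⋊ Γ` locally nilpotent, and let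
`H` be a `Γ`-invariant subgroup of `G` which is a `C_{Aut G}(Γ)`-basis.  If either `Γ` is
finitely generated or `E` is hypercentral, then `C_E(H) = C_E(G)`; in particular `H` is an
Inn-basis of `G`, i.e. `C_G(H) = Z(G)`. -/
theorem centralizer_eq_of_CAutBasis {G : Type u} [Group G]
    (Γ : Subgroup (MulAut G))
    (hE : IsLocallyNilpotent (G ⋊[Γ.subtype] Γ))
    (H : Subgroup G)
    (hinv : ∀ γ ∈ Γ, H.map (γ : MulAut G).toMonoidHom = H)
    (hbasis : ∀ φ : MulAut G, (∀ γ ∈ Γ, φ * γ = γ * φ) → (∀ h ∈ H, φ h = h) → φ = 1)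
    (hcase : Group.FG Γ ∨ IsHypercentral (G ⋊[Γ.subtype] Γ)) :
    Subgroup.centralizer ((H.map (SemidirectProduct.inl :
        G →* (G ⋊[Γ.subtype] Γ))) : Set (G ⋊[Γ.subtype] Γ)) =
      Subgroup.centralizer (((⊤ : Subgroup G).map (SemidirectProduct.inl :
        G →* (G ⋊[Γ.subtype] Γ))) : Set (G ⋊[Γ.subtype] Γ)) ∧
      Subgroup.centralizer (H : Set G) = Subgroup.center G := by
  set K := fixingSubgroup (MulAut G) (H : Set G)
  have hΓK : Γ ≤ normalizer (K : Set (MulAut G)) := fun γ hγ =>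
    mem_normalizer_fixingSubgroup (by
      rw [← Set.image_smul]
      simpa using congrArg SetLike.coe (hinv γ hγ))
  have hK : K ⊓ centralizer (Γ : Set (MulAut G)) = ⊥ := eq_bot_iff.2 fun φ ⟨hφK, hφΓ⟩ =>
    hbasis φ (fun γ hγ => (mem_centralizer_iff.1 hφΓ γ hγ).symm)
      ((mem_fixingSubgroup_iff _).1 hφK)
  have hC := SemidirectProduct.centralizer_map_inl_eq_of_toMulAut_eq_one fun e he => by
    obtain ⟨T, hT, hM⟩ := SemidirectProduct.exists_closure_eq_range_isHypercentral hE hcase e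
    exact eq_one_of_mem_of_isHypercentral_closure_insert (hT.trans Γ.range_subtype) hΓK hK he hM
  exact ⟨hC, SemidirectProduct.centralizer_eq_center_of_centralizer_map_inl_eq hC⟩
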